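/- If H is a Sidorenko graph then every edge of H is smooth in H: for every edge e = (x₁,x₂) of H and every finite graph G with edge density d > 0, choosing a uniformly random edge f of G, we have E(ln t_f(H*, G)) ≥ (|E(H)| − 1) ln d, where H* is H with e removed and its endpoints labeled, and t_f(H*, G) is the homomorphism density of H* with the two labeled vertices mapped to the endpoints of f. -/

import Mathlib

open Finset

noncomputable section
open scoped Classical

/-- The real-valued adjacency indicator of a graph. -/
def adjInd {U : Type} (G : SimpleGraph U) (u v : U) : ℝ := if G.Adj u v then 1 else 0

/-- The product of adjacency indicators of `G` over the edges of a template graph `Hs`,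
evaluated at a vertex-assignment `x`. -/
def adjProd {U : Type} (G : SimpleGraph U) {k : ℕ} (Hs : SimpleGraph (Fin k))
    (x : Fin k → U) : ℝ :=
  ∏ e ∈ Hs.edgeFinset,
    Sym2.lift ⟨fun a b => adjInd G (x a) (x b),
      fun a b => by simp [adjInd, SimpleGraph.adj_comm]⟩ e

/-- The edge density of a finite graph `G`. -/
def graphDensity {U : Type} [Fintype U] (G : SimpleGraph U) : ℝ :=
  ((Fintype.card U : ℝ) ^ 2)⁻¹ * ∑ u : U, ∑ v : U, adjInd G u v

/-- The normalized degree of a vertex in a finite graph. -/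
def graphDeg {U : Type} [Fintype U] (G : SimpleGraph U) (u : U) : ℝ :=
  (Fintype.card U : ℝ)⁻¹ * ∑ v : U, adjInd G u v

/-- The homomorphism density `t(Hs, G)`. -/
def homDensity {U : Type} [Fintype U] (G : SimpleGraph U) {m : ℕ}
    (Hs : SimpleGraph (Fin m)) : ℝ :=
  ((Fintype.card U : ℝ) ^ m)⁻¹ * ∑ x : Fin m → U, adjProd G Hs x

/-- Extend an assignment `y` of the first `n` (labeled) vertices by `x` on the rest. -/
def extAssign {U : Type} {m n : ℕ} (y : Fin n → U) (x : Fin m → U) : Fin m → U :=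
  fun i => if h : (i : ℕ) < n then y ⟨i, h⟩ else x i

/-- The restricted homomorphism density `t_S(Hs, G)(y)`, with the first `n` (labeled)
vertices fixed to `y`. -/
def restrictedHomDensity {U : Type} [Fintype U] (G : SimpleGraph U) {m : ℕ} (n : ℕ)
    (Hs : SimpleGraph (Fin m)) (y : Fin n → U) : ℝ :=
  ((Fintype.card U : ℝ) ^ m)⁻¹ * ∑ x : Fin m → U, adjProd G Hs (extAssign y x)

/-- The canonical tree weight `f_T` (graph version):
`f_T(y) = d⁻¹ ∏ᵢ d(yᵢ)^{1-rᵢ} ∏_{(xᵢ,xⱼ)∈E(T)} A(yᵢ,yⱼ)`. -/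
def treeWeightG {U : Type} [Fintype U] (G : SimpleGraph U) {n : ℕ}
    (T : SimpleGraph (Fin n)) (y : Fin n → U) : ℝ :=
  (graphDensity G)⁻¹ *
    (∏ i : Fin n, graphDeg G (y i) ^ ((1 : ℤ) - (T.degree i : ℤ))) * adjProd G T y

/-- `H*`: the graph `H` with the edges of the tree `T` (spanned on the first `n` vertices)
deleted. -/
def deleteTreeEdges {m n : ℕ} (hnm : n ≤ m) (H : SimpleGraph (Fin m))
    (T : SimpleGraph (Fin n)) : SimpleGraph (Fin m) :=
  H.deleteEdges (Sym2.map (Fin.castLE hnm) '' T.edgeSet)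

/-- Graph-theoretic smoothness: the tree `T`, spanned on the first `n` (labeled) vertices
of `H`, is smooth in `H` if for every finite graph `G` of positive edge density `d`,
`E_{μ_T}(ln t_S(H*, G)) ≥ |E(H*)| ln d`, where `μ_T` is the distribution on copies of `T`
in `G` with density `f_T` (with respect to the uniform measure). -/
def IsSmoothG {m n : ℕ} (hnm : n ≤ m) (H : SimpleGraph (Fin m))
    (T : SimpleGraph (Fin n)) : Prop :=
  ∀ (U : Type) [Fintype U] [DecidableEq U] (G : SimpleGraph U),
    0 < graphDensity G →
    (((Fintype.card U : ℝ) ^ n)⁻¹ * ∑ y : Fin n → U, treeWeightG G T y *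
        Real.log (restrictedHomDensity G n (deleteTreeEdges hnm H T) y))
      ≥ ((deleteTreeEdges hnm H T).edgeFinset.card : ℝ) * Real.log (graphDensity G)

/-- The restricted homomorphism density `t_f(Hs, G)` of a two-rooted template `Hs`, with
the labeled vertices `v₁, v₂` mapped to the endpoints `u, v` of the edge `f` of `G`. -/
def edgeRootedDensity {U : Type} [Fintype U] (G : SimpleGraph U) {m : ℕ}
    (Hs : SimpleGraph (Fin m)) (v₁ v₂ : Fin m) (u v : U) : ℝ :=
  ((Fintype.card U : ℝ) ^ m)⁻¹ *
    ∑ x : Fin m → U, adjProd G Hs (Function.update (Function.update x v₁ u) v₂ v)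

/-!
Let `L` be the average of `log t_f(H*, G)` over the ordered edges `f` of `G`. In the tensor
power `G^K` an edge `f` is a `K`-tuple of edges `fᵢ` of `G` and `t_f(H*, G^K) = ∏ᵢ t_{fᵢ}(H*, G)`,
so `log t_f(H*, G^K)` is a sum of `K` independent samples of `log t_f(H*, G)`. By Chebyshev's
inequality, deleting the edges of `G^K` on which this sum exceeds `K (L + ε)` (in either
orientation) keeps a graph `G'` of density `d' ≥ d^K / 2` with `t_f(H*, G') ≤ exp (K (L + ε))`
on every edge. Splitting `t(H, G')` along `e` and using that `H` is Sidorenko gives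
`d'^|E(H)| ≤ t(H, G') ≤ d' exp (K (L + ε))`; taking logarithms, dividing by `K` and letting
`K → ∞` proves the bound.
-/

open Function

section Sums

variable {ι α : Type*} [Fintype ι] [DecidableEq ι] [Fintype α]

theorem sum_sum_update {M : Type*} [AddCommMonoid M] (f : (ι → α) → M) (i : ι) :
    ∑ u : α, ∑ x : ι → α, f (update x i u) = Fintype.card α • ∑ x, f x := by
  let e : Equiv.Perm (α × (ι → α)) :=
    Involutive.toPerm (fun q => (q.2 i, update q.2 i q.1)) fun q => by simp
  calc ∑ u : α, ∑ x : ι → α, f (update x i u) = ∑ q : α × (ι → α), f (e q).2 :=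
        (Fintype.sum_prod_type' _).symm
    _ = ∑ q : α × (ι → α), f q.2 := Equiv.sum_comp e (fun q => f q.2)
    _ = Fintype.card α • ∑ x, f x := by simp only [Fintype.sum_prod_type, sum_const, card_univ]

theorem sum_sum_pair_eq_sum_pi {β M : Type*} [Fintype β] [AddCommMonoid M]
    (F : (ι → α × β) → M) :
    ∑ x : ι → α, ∑ y : ι → β, F (fun i => (x i, y i)) = ∑ g : ι → α × β, F g := by
  rw [← Fintype.sum_prod_type',
    ← (Equiv.arrowProdEquivProdArrow ι (fun _ => α) (fun _ => β)).sum_comp]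
  rfl

theorem sum_pi_prod_eq_prod_sum {κ R : Type*} [Fintype κ] [DecidableEq κ] [CommSemiring R]
    (F : ι → (κ → α) → R) :
    ∑ w : κ → ι → α, ∏ i, F i (fun j => w j i) = ∏ i, ∑ ω, F i ω := by
  rw [Fintype.prod_sum, ← (Equiv.piComm fun (_ : κ) (_ : ι) => α).sum_comp]
  rfl

end Sums

section Basic

variable {U : Type}

theorem adjInd_nonneg (G : SimpleGraph U) (u v : U) : 0 ≤ adjInd G u v := by
  unfold adjInd; split_ifs <;> norm_num

theorem adjInd_mono {G G' : SimpleGraph U} (h : G' ≤ G) (u v : U) :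
    adjInd G' u v ≤ adjInd G u v := by
  unfold adjInd
  by_cases huv : G'.Adj u v
  · simp [huv, h huv]
  · simp only [huv, if_false]; split_ifs <;> norm_num

theorem adjProd_nonneg (G : SimpleGraph U) {k : ℕ} (Hs : SimpleGraph (Fin k))
    (x : Fin k → U) : 0 ≤ adjProd G Hs x :=
  prod_nonneg fun e _ => e.ind fun _ _ => adjInd_nonneg G _ _

theorem adjProd_mono {G G' : SimpleGraph U} (h : G' ≤ G) {k : ℕ} (Hs : SimpleGraph (Fin k))
    (x : Fin k → U) : adjProd G' Hs x ≤ adjProd G Hs x :=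
  prod_le_prod (fun e _ => e.ind fun _ _ => adjInd_nonneg G' _ _)
    (fun e _ => e.ind fun _ _ => adjInd_mono h _ _)

theorem adjProd_eq_adjInd_mul_deleteEdges (G : SimpleGraph U) {m : ℕ} {H : SimpleGraph (Fin m)}
    {v₁ v₂ : Fin m} (he : H.Adj v₁ v₂) (x : Fin m → U) :
    adjProd G H x = adjInd G (x v₁) (x v₂) * adjProd G (H.deleteEdges {s(v₁, v₂)}) x := by
  have hedges : (H.deleteEdges {s(v₁, v₂)}).edgeFinset = H.edgeFinset.erase s(v₁, v₂) := by
    ext e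
    simp only [SimpleGraph.mem_edgeFinset, SimpleGraph.edgeSet_deleteEdges, Set.mem_sdiff,
      mem_erase, Set.mem_singleton_iff]
    tauto
  unfold adjProd
  rw [← mul_prod_erase _ _ (H.mem_edgeFinset.mpr (H.mem_edgeSet.mpr he)), Sym2.lift_mk]
  congr 1
  exact prod_congr (by convert hedges.symm) fun _ _ => rfl

theorem sum_adjInd_mul_eq_sum_filter (G : SimpleGraph U) [Fintype U] (f : U × U → ℝ) :
    ∑ p : U × U, adjInd G p.1 p.2 * f p =
      ∑ p ∈ univ.filter (fun p : U × U => G.Adj p.1 p.2), f p := by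
  simp only [adjInd, ite_mul, one_mul, zero_mul, sum_filter]

theorem sum_adjInd_pos [Fintype U] {G : SimpleGraph U} (hd : 0 < graphDensity G) :
    0 < ∑ p : U × U, adjInd G p.1 p.2 := by
  rw [Fintype.sum_prod_type']
  exact pos_of_mul_pos_right hd (by positivity)

theorem sum_adjInd_mul_eq_mean_mul [Fintype U] (G : SimpleGraph U)
    (hd : 0 < graphDensity G) (f : U × U → ℝ) :
    ∑ p : U × U, adjInd G p.1 p.2 * f p =
      (((univ.filter fun p : U × U => G.Adj p.1 p.2).card : ℝ)⁻¹ *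
        ∑ p ∈ univ.filter (fun p : U × U => G.Adj p.1 p.2), f p) *
        ∑ p : U × U, adjInd G p.1 p.2 := by
  have hcard : ∑ p : U × U, adjInd G p.1 p.2 =
      (univ.filter fun p : U × U => G.Adj p.1 p.2).card := by
    simpa using sum_adjInd_mul_eq_sum_filter G 1
  have hpos := sum_adjInd_pos hd
  rw [sum_adjInd_mul_eq_sum_filter, hcard] at *
  field_simp

end Basic

section Rooted

variable {U : Type} [Fintype U]

theorem edgeRootedDensity_nonneg (G : SimpleGraph U) {m : ℕ} (Hs : SimpleGraph (Fin m))
    (v₁ v₂ : Fin m) (u v : U) : 0 ≤ edgeRootedDensity G Hs v₁ v₂ u v :=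
  mul_nonneg (by positivity) (sum_nonneg fun _ _ => adjProd_nonneg G Hs _)

theorem edgeRootedDensity_mono {G G' : SimpleGraph U} (h : G' ≤ G) {m : ℕ}
    (Hs : SimpleGraph (Fin m)) (v₁ v₂ : Fin m) (u v : U) :
    edgeRootedDensity G' Hs v₁ v₂ u v ≤ edgeRootedDensity G Hs v₁ v₂ u v :=
  mul_le_mul_of_nonneg_left (sum_le_sum fun _ _ => adjProd_mono h Hs _) (by positivity)

theorem homDensity_eq_sum_adjInd_mul_edgeRootedDensity (G : SimpleGraph U) {m : ℕ}
    {H : SimpleGraph (Fin m)} {v₁ v₂ : Fin m} (he : H.Adj v₁ v₂) :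
    homDensity G H = ((Fintype.card U : ℝ) ^ 2)⁻¹ * ∑ p : U × U,
      adjInd G p.1 p.2 * edgeRootedDensity G (H.deleteEdges {s(v₁, v₂)}) v₁ v₂ p.1 p.2 := by
  let root : U × U → (Fin m → U) → Fin m → U := fun p x => update (update x v₁ p.1) v₂ p.2
  have hsplit : ∀ p x, adjInd G p.1 p.2 * adjProd G (H.deleteEdges {s(v₁, v₂)}) (root p x) =
      adjProd G H (root p x) := fun p x => by
    rw [adjProd_eq_adjInd_mul_deleteEdges G he]
    simp only [root, update_self, update_of_ne he.ne]
  have hsum : ∑ p : U × U, ∑ x, adjProd G H (root p x) =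
      (Fintype.card U : ℝ) ^ 2 * ∑ x, adjProd G H x := by
    rw [Fintype.sum_prod_type, sum_comm]
    calc _ = ∑ v : U, Fintype.card U • ∑ x, adjProd G H (update x v₂ v) :=
          sum_congr rfl fun v _ => sum_sum_update (fun y => adjProd G H (update y v₂ v)) v₁
      _ = Fintype.card U • Fintype.card U • ∑ x, adjProd G H x := by
          rw [← smul_sum, sum_sum_update]
      _ = _ := by simp only [nsmul_eq_mul]; ring
  calc homDensity G H = ((Fintype.card U : ℝ) ^ 2)⁻¹ *
        (((Fintype.card U : ℝ) ^ m)⁻¹ * ∑ p : U × U, ∑ x, adjProd G H (root p x)) := by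
        rw [hsum, homDensity]
        rcases isEmpty_or_nonempty U with hU | hU
        · simp [zero_pow (Fin.pos v₁).ne']
        · field_simp
    _ = _ := by
        simp only [edgeRootedDensity, mul_sum, ← hsplit]
        congr 1; ext p; congr 1; ext x; ring

end Rooted

section Tensor

variable {U : Type} {ι : Type} [Fintype ι]

def tensorPow (G : SimpleGraph U) (ι : Type) [Nonempty ι] : SimpleGraph (ι → U) where
  Adj x y := ∀ i, G.Adj (x i) (y i)
  symm := ⟨fun _ _ h i => (h i).symm⟩
  loopless := ⟨fun _ h => G.loopless.irrefl _ (h (Classical.arbitrary ι))⟩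

variable [Nonempty ι]

theorem adjInd_tensorPow (G : SimpleGraph U) (x y : ι → U) :
    adjInd (tensorPow G ι) x y = ∏ i, adjInd G (x i) (y i) := by
  simp only [adjInd, prod_boole, mem_univ, true_implies]
  exact if_congr Iff.rfl rfl rfl

theorem adjProd_tensorPow (G : SimpleGraph U) {m : ℕ} (Hs : SimpleGraph (Fin m))
    (z : Fin m → ι → U) :
    adjProd (tensorPow G ι) Hs z = ∏ i, adjProd G Hs (fun j => z j i) := by
  unfold adjProd
  rw [prod_comm]
  exact prod_congr rfl fun e _ => e.ind fun a b => adjInd_tensorPow G (z a) (z b)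

variable [DecidableEq ι] [Fintype U]

theorem edgeRootedDensity_tensorPow (G : SimpleGraph U) {m : ℕ} (Hs : SimpleGraph (Fin m))
    (v₁ v₂ : Fin m) (x y : ι → U) :
    edgeRootedDensity (tensorPow G ι) Hs v₁ v₂ x y =
      ∏ i, edgeRootedDensity G Hs v₁ v₂ (x i) (y i) := by
  have hroot : ∀ (w : Fin m → ι → U) i, (fun j => update (update w v₁ x) v₂ y j i) =
      update (update (fun j => w j i) v₁ (x i)) v₂ (y i) := fun w i => by
    funext j
    simp only [apply_update (fun _ (h : ι → U) => h i)]
  simp only [edgeRootedDensity, adjProd_tensorPow, hroot,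
    prod_mul_distrib, prod_const, card_univ, Fintype.card_fun, ← inv_pow]
  congr 1
  · push_cast; ring
  · exact sum_pi_prod_eq_prod_sum fun i ω => adjProd G Hs (update (update ω v₁ (x i)) v₂ (y i))

theorem graphDensity_tensorPow (G : SimpleGraph U) :
    graphDensity (tensorPow G ι) = graphDensity G ^ Fintype.card ι := by
  have hsum : ∑ x : ι → U, ∑ y : ι → U, ∏ i, adjInd G (x i) (y i) =
      (∑ u, ∑ v, adjInd G u v) ^ Fintype.card ι := by
    rw [sum_sum_pair_eq_sum_pi (fun g : ι → U × U => ∏ i, adjInd G (g i).1 (g i).2),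
      ← Fintype.prod_sum (fun (_ : ι) (p : U × U) => adjInd G p.1 p.2), prod_const, card_univ,
      Fintype.sum_prod_type]
  simp only [graphDensity, adjInd_tensorPow, hsum, Fintype.card_fun]
  push_cast
  ring

end Tensor

section Moments

variable {ι α : Type*} [Fintype ι] [DecidableEq ι] [Fintype α]

theorem sum_pi_prod_mul_mul (a Y : α → ℝ) (hY : ∑ p, a p * Y p = 0) (i j : ι) :
    ∑ g : ι → α, (∏ l, a (g l)) * (Y (g i) * Y (g j)) =
      if i = j then (∑ p, a p * Y p ^ 2) * (∑ p, a p) ^ (Fintype.card ι - 1) else 0 := by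
  let c : ι → α → ℝ := fun l p => a p * (if l = i then Y p else 1) * (if l = j then Y p else 1)
  have hc : ∀ g : ι → α, ∏ l, c l (g l) = (∏ l, a (g l)) * (Y (g i) * Y (g j)) := fun g => by
    simp only [c, prod_mul_distrib, prod_ite_eq', mem_univ, if_true]
    ring
  simp only [← hc, ← Fintype.prod_sum]
  split_ifs with hij
  · subst hij
    rw [← mul_prod_erase _ _ (mem_univ i), prod_congr rfl fun l hl => ?_, prod_const,
      card_erase_of_mem (mem_univ i), card_univ]
    · congr 1; exact sum_congr rfl fun p _ => by simp only [c, if_true]; ring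
    · simp only [c, if_neg (ne_of_mem_erase hl), mul_one]
  · refine prod_eq_zero (mem_univ i) ?_
    simpa only [c, if_true, if_neg hij, mul_one] using hY

theorem sum_pi_prod_mul_sum_sq (a Y : α → ℝ) (hY : ∑ p, a p * Y p = 0) :
    ∑ g : ι → α, (∏ l, a (g l)) * (∑ i, Y (g i)) ^ 2 =
      Fintype.card ι * (∑ p, a p * Y p ^ 2) * (∑ p, a p) ^ (Fintype.card ι - 1) := by
  have hexpand : ∀ g : ι → α, (∏ l, a (g l)) * (∑ i, Y (g i)) ^ 2 =
      ∑ i, ∑ j, (∏ l, a (g l)) * (Y (g i) * Y (g j)) := fun g => by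
    rw [sq, sum_mul_sum, mul_sum]
    simp only [mul_sum]
  rw [sum_congr rfl fun g _ => hexpand g, sum_comm, sum_congr rfl fun i _ => sum_comm]
  simp only [sum_pi_prod_mul_mul a Y hY, sum_ite_eq, mem_univ, if_true, sum_const, card_univ,
    nsmul_eq_mul]
  ring

/-- Chebyshev's inequality for the sum of `card ι` independent samples from the weights `a`. -/
theorem sq_mul_sum_pi_prod_tail_le (a X : α → ℝ) (ha : ∀ p, 0 ≤ a p) {L ε : ℝ}
    (hmean : ∑ p, a p * X p = L * ∑ p, a p) (hε : 0 < ε) :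
    (Fintype.card ι * ε) ^ 2 * ∑ g : ι → α,
        (if ∑ i, X (g i) ≤ Fintype.card ι * (L + ε) then 0 else ∏ i, a (g i)) ≤
      Fintype.card ι * (∑ p, a p * (X p - L) ^ 2) * (∑ p, a p) ^ (Fintype.card ι - 1) := by
  have hY : ∑ p, a p * (X p - L) = 0 := by
    simp only [mul_sub, sum_sub_distrib, hmean, ← sum_mul]; ring
  rw [← sum_pi_prod_mul_sum_sq a _ hY, mul_sum]
  refine sum_le_sum fun g _ => ?_
  have hprod : 0 ≤ ∏ i, a (g i) := prod_nonneg fun i _ => ha (g i)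
  split_ifs with hgood
  · rw [mul_zero]; exact mul_nonneg hprod (sq_nonneg _)
  · have hdev : Fintype.card ι * ε ≤ ∑ i, (X (g i) - L) := by
      rw [sum_sub_distrib, sum_const, card_univ, nsmul_eq_mul]; linarith
    rw [mul_comm]
    exact mul_le_mul_of_nonneg_left (pow_le_pow_left₀ (by positivity) hdev 2) hprod

end Moments

section Pruning

variable {V : Type}

def pruneEdges (G : SimpleGraph V) (good : V → V → Prop) : SimpleGraph V where
  Adj x y := G.Adj x y ∧ good x y ∧ good y x
  symm := ⟨fun _ _ h => ⟨h.1.symm, h.2.2, h.2.1⟩⟩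
  loopless := ⟨fun x h => G.loopless.irrefl x h.1⟩

theorem pruneEdges_le (G : SimpleGraph V) (good : V → V → Prop) : pruneEdges G good ≤ G :=
  fun _ _ h => h.1

theorem graphDensity_sub_le_graphDensity_pruneEdges [Fintype V] (G : SimpleGraph V)
    (good : V → V → Prop) :
    graphDensity G - 2 * (((Fintype.card V : ℝ) ^ 2)⁻¹ *
        ∑ x, ∑ y, if good x y then 0 else adjInd G x y) ≤
      graphDensity (pruneEdges G good) := by
  have hpointwise : ∀ x y, adjInd G x y - (if good x y then 0 else adjInd G x y) -
      (if good y x then 0 else adjInd G y x) ≤ adjInd (pruneEdges G good) x y := by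
    intro x y
    simp only [adjInd, pruneEdges, G.adj_comm y x]
    split_ifs <;> simp_all
  have hsum := sum_le_sum fun x (_ : x ∈ univ) => sum_le_sum fun y (_ : y ∈ univ) =>
    hpointwise x y
  simp only [sum_sub_distrib] at hsum
  rw [sum_comm (f := fun x y => if good y x then 0 else adjInd G y x)] at hsum
  unfold graphDensity
  have := mul_le_mul_of_nonneg_left hsum (by positivity : (0 : ℝ) ≤ ((Fintype.card V : ℝ) ^ 2)⁻¹)
  linarith

end Pruning

section PrunedTensorPow

variable {U : Type} [Fintype U] {ι : Type} [Fintype ι] [DecidableEq ι] [Nonempty ι]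

theorem graphDensity_pow_div_two_le_pruneEdges_tensorPow (G : SimpleGraph U) (X : U × U → ℝ)
    {L ε : ℝ} (hε : 0 < ε)
    (hmean : ∑ p : U × U, adjInd G p.1 p.2 * X p = L * ∑ p : U × U, adjInd G p.1 p.2)
    (hι : 4 * ∑ p : U × U, adjInd G p.1 p.2 * (X p - L) ^ 2 ≤
      Fintype.card ι * ε ^ 2 * ∑ p : U × U, adjInd G p.1 p.2) :
    graphDensity G ^ Fintype.card ι / 2 ≤ graphDensity (pruneEdges (tensorPow G ι)
      fun x y => ∑ i, X (x i, y i) ≤ Fintype.card ι * (L + ε)) := by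
  set K := Fintype.card ι
  set W := ∑ p : U × U, adjInd G p.1 p.2
  set B := ∑ g : ι → U × U,
    if ∑ i, X (g i) ≤ K * (L + ε) then 0 else ∏ i, adjInd G (g i).1 (g i).2
  have hK : 0 < K := Fintype.card_pos
  have hW : 0 ≤ W := sum_nonneg fun p _ => adjInd_nonneg G p.1 p.2
  have hbad : ∑ x : ι → U, ∑ y : ι → U,
      (if ∑ i, X (x i, y i) ≤ K * (L + ε) then 0 else adjInd (tensorPow G ι) x y) = B := by
    simp only [adjInd_tensorPow]
    exact sum_sum_pair_eq_sum_pi fun g : ι → U × U =>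
      if ∑ i, X (g i) ≤ K * (L + ε) then 0 else ∏ i, adjInd G (g i).1 (g i).2
  have hB : B ≤ W ^ K / 4 := by
    have hcheb := sq_mul_sum_pi_prod_tail_le (ι := ι) (fun p => adjInd G p.1 p.2) X
      (fun p => adjInd_nonneg G p.1 p.2) hmean hε
    have hWK : W ^ K = W * W ^ (K - 1) := by rw [← pow_succ', Nat.sub_add_cancel hK]
    have hKε : 0 < ((K : ℝ) * ε) ^ 2 := by positivity
    refine le_of_mul_le_mul_left (hcheb.trans ?_) hKε
    rw [hWK]
    have := mul_le_mul_of_nonneg_right hι (pow_nonneg hW (K - 1))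
    nlinarith
  have hdK : graphDensity G ^ K = ((Fintype.card (ι → U) : ℝ) ^ 2)⁻¹ * W ^ K := by
    simp only [graphDensity, W, Fintype.sum_prod_type, Fintype.card_fun]
    push_cast
    ring
  have hprune := graphDensity_sub_le_graphDensity_pruneEdges (tensorPow G ι)
    fun x y => ∑ i, X (x i, y i) ≤ K * (L + ε)
  rw [graphDensity_tensorPow, hbad] at hprune
  have := mul_le_mul_of_nonneg_left hB
    (by positivity : (0 : ℝ) ≤ ((Fintype.card (ι → U) : ℝ) ^ 2)⁻¹)
  linarith

theorem edgeRootedDensity_pruneEdges_tensorPow_le (G : SimpleGraph U) {m : ℕ}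
    (Hs : SimpleGraph (Fin m)) (v₁ v₂ : Fin m) {X : U × U → ℝ}
    (hX : ∀ p : U × U, edgeRootedDensity G Hs v₁ v₂ p.1 p.2 ≤ Real.exp (X p)) {β : ℝ}
    {x y : ι → U} (hxy : (pruneEdges (tensorPow G ι) fun x y => ∑ i, X (x i, y i) ≤ β).Adj x y) :
    edgeRootedDensity (pruneEdges (tensorPow G ι) fun x y => ∑ i, X (x i, y i) ≤ β) Hs v₁ v₂ x y ≤
      Real.exp β :=
  calc _ ≤ edgeRootedDensity (tensorPow G ι) Hs v₁ v₂ x y :=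
        edgeRootedDensity_mono (pruneEdges_le _ _) Hs v₁ v₂ x y
    _ = ∏ i, edgeRootedDensity G Hs v₁ v₂ (x i) (y i) := edgeRootedDensity_tensorPow G Hs v₁ v₂ x y
    _ ≤ ∏ i, Real.exp (X (x i, y i)) :=
        prod_le_prod (fun i _ => edgeRootedDensity_nonneg G Hs v₁ v₂ _ _) fun i _ => hX (x i, y i)
    _ ≤ Real.exp β := by rw [← Real.exp_sum]; exact Real.exp_le_exp.mpr hxy.2.1

end PrunedTensorPow

section Sidorenko

variable {U : Type} [Fintype U] {m : ℕ} {H : SimpleGraph (Fin m)} {v₁ v₂ : Fin m}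

theorem one_le_card_edgeFinset (he : H.Adj v₁ v₂) : 1 ≤ H.edgeFinset.card :=
  card_pos.mpr ⟨s(v₁, v₂), by simpa using he⟩

theorem homDensity_le_graphDensity_mul (G : SimpleGraph U) (he : H.Adj v₁ v₂) {c : ℝ}
    (hc : ∀ u v, G.Adj u v → edgeRootedDensity G (H.deleteEdges {s(v₁, v₂)}) v₁ v₂ u v ≤ c) :
    homDensity G H ≤ graphDensity G * c := by
  have hpointwise : ∀ p : U × U, adjInd G p.1 p.2 *
      edgeRootedDensity G (H.deleteEdges {s(v₁, v₂)}) v₁ v₂ p.1 p.2 ≤ adjInd G p.1 p.2 * c := by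
    intro p
    unfold adjInd
    split_ifs with hp
    · simpa only [one_mul] using hc p.1 p.2 hp
    · simp only [zero_mul, le_refl]
  rw [homDensity_eq_sum_adjInd_mul_edgeRootedDensity G he, graphDensity, ← Fintype.sum_prod_type',
    mul_assoc, sum_mul]
  exact mul_le_mul_of_nonneg_left (sum_le_sum fun p _ => hpointwise p) (by positivity)

theorem graphDensity_pow_pred_le (G : SimpleGraph U) (he : H.Adj v₁ v₂)
    (hSid : graphDensity G ^ H.edgeFinset.card ≤ homDensity G H) (hd : 0 < graphDensity G)
    {c : ℝ}
    (hc : ∀ u v, G.Adj u v → edgeRootedDensity G (H.deleteEdges {s(v₁, v₂)}) v₁ v₂ u v ≤ c) :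
    graphDensity G ^ (H.edgeFinset.card - 1) ≤ c := by
  refine le_of_mul_le_mul_left ?_ hd
  rw [← pow_succ', Nat.sub_add_cancel (one_le_card_edgeFinset he)]
  exact hSid.trans (homDensity_le_graphDensity_mul G he hc)

theorem sub_one_mul_log_graphDensity_le
    (hSid : ∀ (U : Type) [Fintype U] [DecidableEq U] (G : SimpleGraph U),
      homDensity G H ≥ graphDensity G ^ H.edgeFinset.card)
    (he : H.Adj v₁ v₂) (G : SimpleGraph U)
    (hd : 0 < graphDensity G) {L ε : ℝ} (hε : 0 < ε)
    (hmean : ∑ p : U × U, adjInd G p.1 p.2 *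
        Real.log (edgeRootedDensity G (H.deleteEdges {s(v₁, v₂)}) v₁ v₂ p.1 p.2) =
      L * ∑ p : U × U, adjInd G p.1 p.2)
    (ι : Type) [Fintype ι] [DecidableEq ι] [Nonempty ι]
    (hι : 4 * ∑ p : U × U, adjInd G p.1 p.2 *
        (Real.log (edgeRootedDensity G (H.deleteEdges {s(v₁, v₂)}) v₁ v₂ p.1 p.2) - L) ^ 2 ≤
      Fintype.card ι * ε ^ 2 * ∑ p : U × U, adjInd G p.1 p.2) :
    ((H.edgeFinset.card : ℝ) - 1) *
        (Fintype.card ι * Real.log (graphDensity G) - Real.log 2) ≤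
      Fintype.card ι * (L + ε) := by
  set X : U × U → ℝ :=
    fun p => Real.log (edgeRootedDensity G (H.deleteEdges {s(v₁, v₂)}) v₁ v₂ p.1 p.2)
  set K := Fintype.card ι
  set G' := pruneEdges (tensorPow G ι) fun x y => ∑ i, X (x i, y i) ≤ K * (L + ε)
  have hdens : graphDensity G ^ K / 2 ≤ graphDensity G' :=
    graphDensity_pow_div_two_le_pruneEdges_tensorPow G X hε hmean hι
  have hd' : 0 < graphDensity G' := (by positivity : (0 : ℝ) < _).trans_le hdens
  have hbound : graphDensity G' ^ (H.edgeFinset.card - 1) ≤ Real.exp (K * (L + ε)) :=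
    graphDensity_pow_pred_le G' he (hSid _ G') hd' fun x y hxy =>
      -- `Real.le_exp_log` also holds at `0`, where `log 0 = 0`
      edgeRootedDensity_pruneEdges_tensorPow_le G _ v₁ v₂ (fun p => Real.le_exp_log _) hxy
  have hlogd' : K * Real.log (graphDensity G) - Real.log 2 ≤ Real.log (graphDensity G') := by
    simpa [Real.log_div, Real.log_pow, hd.ne'] using Real.log_le_log (by positivity) hdens
  have hE := one_le_card_edgeFinset he
  have hlogbound := Real.log_le_log (by positivity) hbound
  rw [Real.log_pow, Real.log_exp, Nat.cast_sub hE, Nat.cast_one] at hlogbound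
  nlinarith [(Nat.one_le_cast (α := ℝ)).mpr hE]

end Sidorenko

theorem sidorenko_implies_edge_smooth_general (m : ℕ) (H : SimpleGraph (Fin m))
    (hSid : ∀ (U : Type) [Fintype U] [DecidableEq U] (G : SimpleGraph U),
      homDensity G H ≥ graphDensity G ^ H.edgeFinset.card)
    (v₁ v₂ : Fin m) (he : H.Adj v₁ v₂) :
    ∀ (U : Type) [Fintype U] [DecidableEq U] (G : SimpleGraph U),
      0 < graphDensity G →
      ((Finset.univ.filter fun p : U × U => G.Adj p.1 p.2).card : ℝ)⁻¹ *
          ∑ p ∈ Finset.univ.filter (fun p : U × U => G.Adj p.1 p.2),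
            Real.log (edgeRootedDensity G (H.deleteEdges {s(v₁, v₂)}) v₁ v₂ p.1 p.2)
        ≥ ((H.edgeFinset.card : ℝ) - 1) * Real.log (graphDensity G) := by
  intro U _ _ G hd
  set X : U × U → ℝ :=
    fun p => Real.log (edgeRootedDensity G (H.deleteEdges {s(v₁, v₂)}) v₁ v₂ p.1 p.2)
  set L := ((univ.filter fun p : U × U => G.Adj p.1 p.2).card : ℝ)⁻¹ *
    ∑ p ∈ univ.filter (fun p : U × U => G.Adj p.1 p.2), X p
  set W := ∑ p : U × U, adjInd G p.1 p.2
  set E : ℝ := (H.edgeFinset.card : ℝ)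
  refine le_of_forall_pos_le_add fun ε hε => ?_
  -- the tensor power must be large enough for both error terms to drop below `ε / 2`
  obtain ⟨k, hk⟩ := exists_nat_gt (max
    (4 * (∑ p : U × U, adjInd G p.1 p.2 * (X p - L) ^ 2) / ((ε / 2) ^ 2 * W))
    ((E - 1) * Real.log 2 / (ε / 2)))
  have hK : (k : ℝ) < (k + 1 : ℕ) := by push_cast; linarith
  rw [max_lt_iff, div_lt_iff₀ (mul_pos (by positivity) (sum_adjInd_pos hd)),
    div_lt_iff₀ (half_pos hε)] at hk
  have hbound := sub_one_mul_log_graphDensity_le hSid he G hd (half_pos hε)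
    (sum_adjInd_mul_eq_mean_mul G hd X) (Fin (k + 1))
    (by
      rw [Fintype.card_fin]
      nlinarith [mul_pos (pow_pos (half_pos hε) 2) (sum_adjInd_pos hd)])
  rw [Fintype.card_fin] at hbound
  nlinarith

/-- Smoothness of edges in Sidorenko graphs: if `H` is a Sidorenko graph, then every edge
`e = (v₁, v₂)` of `H` is smooth in `H`: for every finite graph `G` of edge density
`d > 0`, choosing a uniformly random edge `f` of `G`,
`E(ln t_f(H*, G)) ≥ (|E(H)| − 1) ln d`, where `H* = H − e` with endpoints labeled. -/
theorem sidorenko_implies_edge_smooth (m : ℕ) (H : SimpleGraph (Fin m))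
    (hbip : H.Colorable 2)
    (hSid : ∀ (U : Type) [Fintype U] [DecidableEq U] (G : SimpleGraph U),
      homDensity G H ≥ graphDensity G ^ H.edgeFinset.card)
    (v₁ v₂ : Fin m) (he : H.Adj v₁ v₂) :
    ∀ (U : Type) [Fintype U] [DecidableEq U] (G : SimpleGraph U),
      0 < graphDensity G →
      ((Finset.univ.filter fun p : U × U => G.Adj p.1 p.2).card : ℝ)⁻¹ *
          ∑ p ∈ Finset.univ.filter (fun p : U × U => G.Adj p.1 p.2),
            Real.log (edgeRootedDensity G (H.deleteEdges {s(v₁, v₂)}) v₁ v₂ p.1 p.2)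
        ≥ ((H.edgeFinset.card : ℝ) - 1) * Real.log (graphDensity G) :=
  sidorenko_implies_edge_smooth_general m H hSid v₁ v₂ he
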